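/- The average of ReLU(⟨w̄, x⟩) over w̄ uniformly distributed on the unit sphere S^{d-1} equals (C_Γ/√d)·‖x‖, or equivalently the surface integral ∫_{S^{d-1}} ReLU(⟨w̄, x⟩) dσ^{d-1}(w̄) = (π^{(d-1)/2}/Γ((d+1)/2))·‖x‖. -/

import Mathlib

/-!
Integrate `y ↦ max ⟪y, x⟫ 0 * exp (-‖y‖²)` over `ℝ^d` in two ways. In polar coordinates
the integrand is a degree-one homogeneous function times a radial Gaussian, so the integral
is the sphere integral of the theorem times `Γ((d + 1) / 2) / 2`. On the other hand, a
reflection moves `x` to `‖x‖ • eᵢ` without changing the Gaussian, which then factors over the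
coordinates and gives `‖x‖ π^((d - 1) / 2) / 2`. The same polar computation for the constant
`1`, against the Gaussian integral `π^(d / 2)`, gives the area `2 π^(d / 2) / Γ(d / 2)` of
the sphere.
-/

open MeasureTheory Real

noncomputable def Cgamma (d : ℕ) : ℝ :=
  Real.Gamma ((d : ℝ) / 2) * Real.sqrt d / (2 * Real.sqrt π * Real.Gamma (((d : ℝ) + 1) / 2))

open Set Metric Module

lemma integral_Ioi_pow_mul_exp_neg_sq (n : ℕ) :
    ∫ r in Ioi (0 : ℝ), r ^ n * exp (-r ^ 2) = Gamma ((n + 1) / 2) / 2 := by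
  have h := integral_rpow_mul_exp_neg_rpow (p := 2) (q := n) two_pos
    (neg_one_lt_zero.trans_le n.cast_nonneg)
  simp only [rpow_natCast, rpow_two] at h
  rw [h]
  ring

lemma sqrt_pi_pow (n : ℕ) : √π ^ n = π ^ ((n : ℝ) / 2) := by
  rw [sqrt_eq_rpow, ← rpow_mul_natCast pi_pos.le]
  ring_nf

lemma integral_volumeIoiPow (n : ℕ) (G : ℝ → ℝ) :
    ∫ r, G r ∂Measure.volumeIoiPow n = ∫ r in Ioi (0 : ℝ), r ^ n * G r := by
  simp only [Measure.volumeIoiPow, ENNReal.ofReal]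
  rw [integral_withDensity_eq_integral_smul (measurable_subtype_coe.pow_const _).real_toNNReal,
    integral_subtype_comap measurableSet_Ioi (fun r ↦ (r ^ n).toNNReal • G r)]
  refine setIntegral_congr_fun measurableSet_Ioi fun r hr ↦ ?_
  rw [NNReal.smul_def, coe_toNNReal _ (pow_nonneg (le_of_lt hr) _), smul_eq_mul]

section Polar

variable {E : Type*} [NormedAddCommGroup E] [NormedSpace ℝ E] [FiniteDimensional ℝ E]
  [MeasurableSpace E] [BorelSpace E] [Nontrivial E] (μ : Measure E) [μ.IsAddHaarMeasure]

theorem integral_eq_integral_toSphere_mul_integral_Ioi (F : sphere (0 : E) 1 → ℝ)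
    (G : ℝ → ℝ) {g : E → ℝ}
    (hg : ∀ (w : sphere (0 : E) 1) (r : ℝ), 0 < r → g (r • (w : E)) = F w * G r) :
    ∫ y, g y ∂μ =
      (∫ w, F w ∂μ.toSphere) * ∫ r in Ioi (0 : ℝ), r ^ (finrank ℝ E - 1) * G r := by
  have hpolar : ∀ y : ({0}ᶜ : Set E), g y = F (homeomorphUnitSphereProd E y).1 *
      G (homeomorphUnitSphereProd E y).2 := by
    intro y
    have hy : 0 < ‖(y : E)‖ := norm_pos_iff.2 y.2
    simpa [smul_inv_smul₀ hy.ne'] using hg (homeomorphUnitSphereProd E y).1 _ hy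
  calc ∫ y, g y ∂μ = ∫ y : ({0}ᶜ : Set E), g y ∂μ.comap (↑) := by
        rw [integral_subtype_comap (measurableSet_singleton _).compl, restrict_compl_singleton]
    _ = ∫ p, F p.1 * G p.2 ∂μ.toSphere.prod (.volumeIoiPow (finrank ℝ E - 1)) := by
        simp_rw [hpolar]
        exact μ.measurePreserving_homeomorphUnitSphereProd.integral_comp
          (Homeomorph.measurableEmbedding _) (fun p ↦ F p.1 * G p.2)
    _ = _ := by rw [integral_prod_mul F (fun r : Ioi (0 : ℝ) ↦ G r), integral_volumeIoiPow]

end Polar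

section Gaussian

variable {V : Type*} [NormedAddCommGroup V] [InnerProductSpace ℝ V] [FiniteDimensional ℝ V]
  [MeasurableSpace V] [BorelSpace V]

theorem integral_mul_exp_neg_norm_sq_of_homogeneous [Nontrivial V]
    (F : sphere (0 : V) 1 → ℝ) (k : ℕ) {g : V → ℝ}
    (hg : ∀ (w : sphere (0 : V) 1) (r : ℝ), 0 < r → g (r • (w : V)) = r ^ k * F w) :
    ∫ y, g y * exp (-‖y‖ ^ 2) =
      (∫ w, F w ∂(volume : Measure V).toSphere) * (Gamma ((finrank ℝ V + k) / 2) / 2) := by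
  have hdim : 1 ≤ finrank ℝ V := finrank_pos
  rw [integral_eq_integral_toSphere_mul_integral_Ioi volume F (fun r ↦ r ^ k * exp (-r ^ 2))]
  · congr 1
    calc ∫ r in Ioi (0 : ℝ), r ^ (finrank ℝ V - 1) * (r ^ k * exp (-r ^ 2))
        = ∫ r in Ioi (0 : ℝ), r ^ (finrank ℝ V - 1 + k) * exp (-r ^ 2) := by
          simp_rw [pow_add, mul_assoc]
      _ = _ := by
          rw [integral_Ioi_pow_mul_exp_neg_sq]
          push_cast [Nat.cast_sub hdim]
          ring_nf
  · intro w r hr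
    rw [hg w r hr, norm_smul, norm_of_nonneg hr.le, norm_eq_of_mem_sphere w, mul_one]
    ring

theorem toSphere_real_univ_eq [Nontrivial V] :
    (volume : Measure V).toSphere.real univ = 2 * π ^ ((finrank ℝ V : ℝ) / 2) /
      Gamma ((finrank ℝ V : ℝ) / 2) := by
  have hΓ : 0 < Gamma ((finrank ℝ V : ℝ) / 2) :=
    Gamma_pos_of_pos (by have : 0 < finrank ℝ V := finrank_pos; positivity)
  have h := integral_mul_exp_neg_norm_sq_of_homogeneous (V := V) (fun _ ↦ 1) 0
    (g := fun _ ↦ 1) (fun _ _ _ ↦ by simp)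
  simp only [one_mul, integral_const, smul_eq_mul, mul_one, CharP.cast_eq_zero, add_zero] at h
  have hgauss := GaussianFourier.integral_rexp_neg_mul_sq_norm (V := V) one_pos
  simp only [neg_mul, one_mul, div_one] at hgauss
  rw [eq_div_iff hΓ.ne']
  linear_combination -2 * h + 2 * hgauss

theorem integral_comp_inner_norm_eq_of_norm_eq {u v : V} (huv : ‖u‖ = ‖v‖) (f : ℝ → ℝ → ℝ) :
    ∫ y, f (inner ℝ y u) ‖y‖ = ∫ y, f (inner ℝ y v) ‖y‖ := by
  set R := Submodule.reflection (ℝ ∙ (u - v))ᗮ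
  have hRu : R u = v := Submodule.reflection_sub huv
  rw [← R.measurePreserving.integral_comp R.toHomeomorph.measurableEmbedding
    (fun y ↦ f (inner ℝ y v) ‖y‖)]
  simp only [LinearIsometryEquiv.norm_map, ← hRu, LinearIsometryEquiv.inner_map_map]

end Gaussian

lemma exp_neg_norm_sq_eq_prod {ι : Type*} [Fintype ι] (y : EuclideanSpace ℝ ι) :
    exp (-‖y‖ ^ 2) = ∏ j, exp (-y j ^ 2) := by
  rw [EuclideanSpace.norm_eq, sq_sqrt (by positivity), ← exp_sum, ← Finset.sum_neg_distrib]
  simp only [norm_eq_abs, sq_abs]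

theorem integral_comp_apply_mul_exp_neg_norm_sq {ι : Type*} [Fintype ι] [DecidableEq ι] (i : ι)
    (g : ℝ → ℝ) :
    ∫ y : EuclideanSpace ℝ ι, g (y i) * exp (-‖y‖ ^ 2) =
      (∫ t, g t * exp (-t ^ 2)) * √π ^ (Fintype.card ι - 1) := by
  set f : ι → ℝ → ℝ := fun j t ↦ (if j = i then g t else 1) * exp (-t ^ 2)
  have hprod : ∀ y : EuclideanSpace ℝ ι, g (y i) * exp (-‖y‖ ^ 2) = ∏ j, f j (y j) := by
    intro y
    simp only [f, exp_neg_norm_sq_eq_prod, Finset.prod_mul_distrib, Finset.prod_ite_eq',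
      Finset.mem_univ, if_true]
  have hgauss : ∀ j ∈ Finset.univ.erase i, ∫ t, f j t = √π := by
    intro j hj
    simpa [f, (Finset.mem_erase.1 hj).1] using integral_gaussian 1
  calc ∫ y : EuclideanSpace ℝ ι, g (y i) * exp (-‖y‖ ^ 2)
      = ∫ z : ι → ℝ, ∏ j, f j (z j) := by
        simp_rw [hprod]
        exact (EuclideanSpace.volume_preserving_symm_measurableEquiv_toLp ι).integral_comp'
          (fun z : ι → ℝ ↦ ∏ j, f j (z j))
    _ = ∏ j, ∫ t, f j t := integral_fintype_prod_eq_prod f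
    _ = _ := by
        rw [← Finset.mul_prod_erase _ _ (Finset.mem_univ i), Finset.prod_congr rfl hgauss,
          Finset.prod_const, Finset.card_erase_of_mem (Finset.mem_univ i), Finset.card_univ]
        simp [f]

lemma integral_max_zero_mul_exp_neg_sq : ∫ t : ℝ, max t 0 * exp (-t ^ 2) = 1 / 2 := by
  have hind : (fun t : ℝ ↦ max t 0 * exp (-t ^ 2)) =
      (Ioi 0).indicator (fun t ↦ t ^ 1 * exp (-t ^ 2)) := by
    ext t
    rcases le_or_gt t 0 with ht | ht
    · simp [ht, not_lt.2 ht]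
    · simp [ht, ht.le]
  rw [hind, integral_indicator measurableSet_Ioi, integral_Ioi_pow_mul_exp_neg_sq]
  norm_num

theorem integral_max_inner_zero_mul_exp_neg_norm_sq {ι : Type*} [Fintype ι]
    [Nonempty ι] (x : EuclideanSpace ℝ ι) :
    ∫ y : EuclideanSpace ℝ ι, max (inner ℝ y x) 0 * exp (-‖y‖ ^ 2) =
      ‖x‖ * √π ^ (Fintype.card ι - 1) / 2 := by
  classical
  let i : ι := Classical.arbitrary ι
  have hnorm : ‖x‖ = ‖‖x‖ • EuclideanSpace.single i (1 : ℝ)‖ := by simp [norm_smul]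
  rw [integral_comp_inner_norm_eq_of_norm_eq hnorm (fun a b ↦ max a 0 * exp (-b ^ 2))]
  have hinner : ∀ y : EuclideanSpace ℝ ι,
      max (inner ℝ y (‖x‖ • EuclideanSpace.single i (1 : ℝ))) 0 = ‖x‖ * max (y i) 0 := by
    intro y
    rw [real_inner_smul_right, EuclideanSpace.inner_single_right,
      mul_max_of_nonneg _ _ (norm_nonneg x)]
    simp
  simp_rw [hinner, mul_assoc]
  rw [integral_const_mul, integral_comp_apply_mul_exp_neg_norm_sq i (fun t ↦ max t 0),
    integral_max_zero_mul_exp_neg_sq]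
  ring

theorem integral_toSphere_max_inner_zero {ι : Type*} [Fintype ι] [Nonempty ι]
    (x : EuclideanSpace ℝ ι) :
    ∫ w : sphere (0 : EuclideanSpace ℝ ι) 1, max (inner ℝ (w : EuclideanSpace ℝ ι) x) 0
        ∂(volume : Measure (EuclideanSpace ℝ ι)).toSphere =
      π ^ (((Fintype.card ι : ℝ) - 1) / 2) / Gamma (((Fintype.card ι : ℝ) + 1) / 2)
        * ‖x‖ := by
  have hcard : 1 ≤ Fintype.card ι := Fintype.card_pos
  have hΓ : 0 < Gamma (((Fintype.card ι : ℝ) + 1) / 2) := Gamma_pos_of_pos (by positivity)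
  have h := integral_mul_exp_neg_norm_sq_of_homogeneous
    (fun w : sphere (0 : EuclideanSpace ℝ ι) 1 ↦ max (inner ℝ (w : EuclideanSpace ℝ ι) x) 0)
    1 (g := fun y ↦ max (inner ℝ y x) 0) fun w r hr ↦ by
      rw [real_inner_smul_left, pow_one, mul_max_of_nonneg _ _ hr.le, mul_zero]
  rw [integral_max_inner_zero_mul_exp_neg_norm_sq, finrank_euclideanSpace, sqrt_pi_pow,
    Nat.cast_sub hcard, Nat.cast_one] at h
  rw [div_mul_eq_mul_div, eq_div_iff hΓ.ne']
  linear_combination -2 * h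

theorem stmt2 (d : ℕ) (hd : 1 ≤ d) (x : EuclideanSpace ℝ (Fin d)) :
    (∫ w : Metric.sphere (0 : EuclideanSpace ℝ (Fin d)) 1,
        max (inner ℝ (w : EuclideanSpace ℝ (Fin d)) x : ℝ) 0
        ∂((volume : Measure (EuclideanSpace ℝ (Fin d))).toSphere))
      = π ^ (((d : ℝ) - 1) / 2) / Real.Gamma (((d : ℝ) + 1) / 2) * ‖x‖ ∧
    (∫ w : Metric.sphere (0 : EuclideanSpace ℝ (Fin d)) 1,
        max (inner ℝ (w : EuclideanSpace ℝ (Fin d)) x : ℝ) 0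
        ∂((volume : Measure (EuclideanSpace ℝ (Fin d))).toSphere))
      / (((volume : Measure (EuclideanSpace ℝ (Fin d))).toSphere) Set.univ).toReal
      = Cgamma d / Real.sqrt d * ‖x‖ := by
  have : NeZero d := ⟨by omega⟩
  have hrelu := integral_toSphere_max_inner_zero x
  rw [Fintype.card_fin] at hrelu
  refine ⟨hrelu, ?_⟩
  have hsphere := toSphere_real_univ_eq (V := EuclideanSpace ℝ (Fin d))
  rw [measureReal_def, finrank_euclideanSpace_fin] at hsphere
  have hπ : π ^ ((d : ℝ) / 2) = π ^ (((d : ℝ) - 1) / 2) * √π := by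
    rw [sqrt_eq_rpow, ← rpow_add pi_pos]
    ring_nf
  have hd' : (0 : ℝ) < d := by exact_mod_cast hd
  have hΓd := Gamma_pos_of_pos (half_pos hd')
  have hΓd₁ := Gamma_pos_of_pos (half_pos (add_pos hd' one_pos))
  rw [hrelu, hsphere, hπ, Cgamma]
  field_simp
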